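/- Let E be a standard Borel space and let κ₀, …, κ_{n−1} be Markov (probability) kernels from E to E, modeling a discrete-time Markov chain. Given a bounded measurable terminal weight h_n : E → ℝ with h_n(x) > 0 for all x, define backward h_t(x) = ∫ h_{t+1}(x') κ_t(x, dx') for t = n−1, …, 0, and assume 0 < h_t(x) < ∞ for all x and t. Define the h-transformed kernels κ*_t(x, ·) := (κ_t(x, ·)).withDensity(x' ↦ h_{t+1}(x')/h_t(x)). Then for every initial point x₀ ∈ E, the terminal law of the h-transformed chain started at x₀ (i.e., the n-fold sequential composition δ_{x₀} bound successively by κ*₀, κ*₁, …, κ*_{n−1}) equals the terminal law of the original chain started at x₀ (δ_{x₀} bound successively by κ₀, …, κ_{n−1}) reweighted with density x ↦ h_n(x)/h_0(x₀). -/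

import Mathlib

open MeasureTheory ProbabilityTheory

/-- The law of the state at time `n` of a (possibly time-inhomogeneous) Markov chain
with transition (sub-)measures `K t` and initial law `μ`, obtained by successively
binding `μ` with `K 0, K 1, …, K (n-1)`. -/
noncomputable def chainLaw {E : Type*} [MeasurableSpace E]
    (K : ℕ → E → Measure E) (μ : Measure E) : ℕ → Measure E
  | 0 => μ
  | (n + 1) => (chainLaw K μ n).bind (K n)

open scoped ENNReal

/-!
Writing `g t = h t / h 0 x₀`, the transformed transition density from `x` to `x'` is
`g (t + 1) x' / g t x`. Binding a law with density `g t` against it, the factor `g t x`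
cancels, so by induction the law of the transformed chain at time `t` has density `g t` with
respect to the law of the original chain, starting from `g 0 x₀ = 1`.
-/

theorem withDensity_bind_withDensity_div {α β : Type*} [MeasurableSpace α] [MeasurableSpace β]
    (μ : Measure α) (κ : Kernel α β) [IsSFiniteKernel κ] {f : α → ℝ≥0∞} {g : β → ℝ≥0∞}
    (hf : Measurable f) (hg : Measurable g) (hf_ne_zero : ∀ a, f a ≠ 0)
    (hf_ne_top : ∀ a, f a ≠ ⊤) :
    (μ.withDensity f).bind (fun a => (κ a).withDensity (fun b => g b / f a))
      = (μ.bind κ).withDensity g := by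
  have hdens : Measurable (Function.uncurry fun a b => g b / f a) :=
    (hg.comp measurable_snd).div (hf.comp measurable_fst)
  have hmeas : Measurable fun a => (κ a).withDensity (fun b => g b / f a) := by
    convert (Kernel.withDensity κ _).measurable with a
    exact (Kernel.withDensity_apply κ hdens a).symm
  ext s hs
  have hmeas_s : Measurable fun a => (κ a).withDensity (fun b => g b / f a) s :=
    (Measure.measurable_coe hs).comp hmeas
  rw [Measure.bind_apply hs hmeas.aemeasurable, lintegral_withDensity_eq_lintegral_mul _ hf hmeas_s,
    withDensity_apply _ hs, ← lintegral_indicator hs, Measure.lintegral_bind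
    κ.measurable.aemeasurable (hg.indicator hs).aemeasurable]
  refine lintegral_congr fun a => ?_
  simp only [Pi.mul_apply, withDensity_apply _ hs, div_eq_mul_inv]
  rw [lintegral_indicator hs, lintegral_mul_const _ hg, mul_comm (f a), mul_assoc,
    ENNReal.inv_mul_cancel (hf_ne_zero a) (hf_ne_top a), mul_one]

theorem chainLaw_withDensity_ratio {E : Type*} [MeasurableSpace E] (K : ℕ → Kernel E E)
    [∀ t, IsSFiniteKernel (K t)] (Q : ℕ → E → Measure E) (g : ℕ → E → ℝ≥0∞) (μ : Measure E)
    (n : ℕ) (hQ : ∀ t < n, ∀ x, Q t x = (K t x).withDensity (fun y => g (t + 1) y / g t x))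
    (hg : ∀ t ≤ n, Measurable (g t)) (hg_ne_zero : ∀ t < n, ∀ x, g t x ≠ 0)
    (hg_ne_top : ∀ t < n, ∀ x, g t x ≠ ⊤) :
    chainLaw Q (μ.withDensity (g 0)) n = (chainLaw (fun t x => K t x) μ n).withDensity (g n) := by
  induction n with
  | zero => rfl
  | succ n ih =>
    rw [chainLaw, chainLaw, ih (fun t ht => hQ t (by omega)) (fun t ht => hg t (by omega))
      (fun t ht => hg_ne_zero t (by omega)) (fun t ht => hg_ne_top t (by omega)),
      funext (hQ n n.lt_succ_self)]
    exact withDensity_bind_withDensity_div _ _ (hg n n.le_succ) (hg (n + 1) le_rfl)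
      (hg_ne_zero n n.lt_succ_self) (hg_ne_top n n.lt_succ_self)

theorem measurable_of_integral_recursion {E : Type*} [MeasurableSpace E] (κ : ℕ → Kernel E E)
    (h : ℕ → E → ℝ) (n : ℕ) (hmeas : Measurable (h n))
    (hrec : ∀ t < n, ∀ x, h t x = ∫ x', h (t + 1) x' ∂(κ t x)) :
    ∀ t ≤ n, Measurable (h t) := by
  refine fun t ht => Nat.decreasingInduction (fun t ht ih => ?_) hmeas ht
  rw [funext (hrec t ht)]
  exact ih.stronglyMeasurable.integral_kernel.measurable

theorem h_transform_terminal_law_general {E : Type*} [MeasurableSpace E]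
    (n : ℕ) (κ : ℕ → Kernel E E) [∀ t, IsMarkovKernel (κ t)]
    (h : ℕ → E → ℝ)
    (hmeas : Measurable (h n))
    (hrec : ∀ t < n, ∀ x, h t x = ∫ x', h (t + 1) x' ∂(κ t x))
    (hpos : ∀ t ≤ n, ∀ x, 0 < h t x)
    (x₀ : E) :
    chainLaw (fun t x => (κ t x).withDensity
        (fun x' => ENNReal.ofReal (h (t + 1) x' / h t x))) (Measure.dirac x₀) n
      = (chainLaw (fun t x => κ t x) (Measure.dirac x₀) n).withDensity
          (fun x => ENNReal.ofReal (h n x / h 0 x₀)) := by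
  set g : ℕ → E → ℝ≥0∞ := fun t x => ENNReal.ofReal (h t x / h 0 x₀)
  have h₀ := hpos 0 n.zero_le x₀
  have hg_meas : ∀ t ≤ n, Measurable (g t) := fun t ht =>
    ((measurable_of_integral_recursion κ h n hmeas hrec t ht).div_const _).ennreal_ofReal
  have hg_ratio : ∀ t < n, ∀ x x', ENNReal.ofReal (h (t + 1) x' / h t x) = g (t + 1) x' / g t x :=
    fun t ht x x' => by
      rw [← ENNReal.ofReal_div_of_pos (div_pos (hpos t ht.le x) h₀)]
      field_simp
  have hdirac : Measure.dirac x₀ = (Measure.dirac x₀).withDensity (g 0) := by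
    rw [dirac_withDensity' (hg_meas 0 n.zero_le)]
    simp [g, h₀.ne']
  conv_lhs => rw [hdirac]
  exact chainLaw_withDensity_ratio κ _ g _ n
    (fun t ht x => congrArg _ (funext (hg_ratio t ht x))) hg_meas
    (fun t ht x => (ENNReal.ofReal_pos.2 (div_pos (hpos t ht.le x) h₀)).ne')
    (fun t _ x => ENNReal.ofReal_ne_top)

/-- Discrete-time Doob h-transform: the terminal law of the h-transformed chain started
at `x₀` equals the terminal law of the original chain started at `x₀`, reweighted with
density `x ↦ h n x / h 0 x₀`. -/
theorem h_transform_terminal_law {E : Type*} [MeasurableSpace E] [StandardBorelSpace E]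
    (n : ℕ) (κ : ℕ → Kernel E E) [∀ t, IsMarkovKernel (κ t)]
    (h : ℕ → E → ℝ)
    (hmeas : Measurable (h n)) (hbdd : ∃ C, ∀ x, |h n x| ≤ C)
    (hposn : ∀ x, 0 < h n x)
    (hrec : ∀ t < n, ∀ x, h t x = ∫ x', h (t + 1) x' ∂(κ t x))
    (hpos : ∀ t ≤ n, ∀ x, 0 < h t x)
    (x₀ : E) :
    chainLaw (fun t x => (κ t x).withDensity
        (fun x' => ENNReal.ofReal (h (t + 1) x' / h t x))) (Measure.dirac x₀) n
      = (chainLaw (fun t x => κ t x) (Measure.dirac x₀) n).withDensity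
          (fun x => ENNReal.ofReal (h n x / h 0 x₀)) :=
  h_transform_terminal_law_general n κ h hmeas hrec hpos x₀
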